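/- arXiv:2003.01921 — 2 statements merged into one kernel-verified Lean document; each statement's English description precedes it below -/
import Mathlib

section
/- For integers n ≥ 2 and 1 ≤ k ≤ n, the expression k(n-1)/n² + ∑_{i=1}^{n-k} ((n+1-i-k)/(n+1-i))·(1 - (n+1-i-k)/(n+1-i)) + 2·( k(k-1)/(2(n-1)n²) + ∑_{i=1}^{k} ∑_{j=1}^{n-k} ((n+1-j-k)/(n-j) - (n+1-j-k)/(n+1-j))/n ) equals (2k - k² - 2n - 2kn + 2k²n + 2n² - kn²)/((n-1)n²) - k(n+2)H_k/n + k(n+2)H_n/n + k²H^{(2)}_k - k²H^{(2)}_n, where H_m = ∑_{i=1}^m 1/i and H^{(2)}_m = ∑_{i=1}^m 1/i². -/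
open Finset

/-- `harm o m = ∑_{i=1}^m 1/i^o`, the generalized harmonic number. -/
noncomputable def harm (o m : ℕ) : ℝ := ∑ i ∈ Finset.Icc 1 m, (1 : ℝ) / (i : ℝ) ^ o



lemma sum_shift (n k : ℕ) (hkn : k ≤ n) (F : ℝ → ℝ) :
    ∑ i ∈ Icc 1 (n - k), F ((n : ℝ) + 1 - (i : ℝ)) = ∑ t ∈ Ioc k n, F (t : ℝ) := by
  refine Finset.sum_nbij' (fun i => n + 1 - i) (fun t => n + 1 - t) ?_ ?_ ?_ ?_ ?_
  · intro a ha; simp only [mem_Icc] at ha; simp only [mem_Ioc]; omega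
  · intro a ha; simp only [mem_Ioc] at ha; simp only [mem_Icc]; omega
  · intro a ha; simp only [mem_Icc] at ha; omega
  · intro a ha; simp only [mem_Ioc] at ha; omega
  · intro a ha; simp only [mem_Icc] at ha
    congr 1
    have h : a ≤ n + 1 := by omega
    push_cast [Nat.cast_sub h]; ring

lemma sum_shift2 (n k : ℕ) (hk : 1 ≤ k) (F : ℝ → ℝ) :
    ∑ t ∈ Ioc k n, F ((t : ℝ) - 1) = ∑ s ∈ Ioc (k - 1) (n - 1), F (s : ℝ) := by
  refine Finset.sum_nbij' (fun t => t - 1) (fun s => s + 1) ?_ ?_ ?_ ?_ ?_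
  · intro a ha; simp only [mem_Ioc] at ha; simp only [mem_Ioc]; omega
  · intro a ha; simp only [mem_Ioc] at ha; simp only [mem_Ioc]; omega
  · intro a ha; simp only [mem_Ioc] at ha; omega
  · intro a ha; simp only [mem_Ioc] at ha; omega
  · intro a ha; simp only [mem_Ioc] at ha
    congr 1
    have h : 1 ≤ a := by omega
    push_cast [Nat.cast_sub h]; ring

lemma harm_diff (o n k : ℕ) (hkn : k ≤ n) :
    ∑ t ∈ Ioc k n, (1 : ℝ) / (t : ℝ) ^ o = harm o n - harm o k := by
  have h : harm o k + ∑ t ∈ Ioc k n, (1 : ℝ) / (t : ℝ) ^ o = harm o n := by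
    unfold harm
    rw [show Icc 1 k = Ioc 0 k from rfl, show Icc 1 n = Ioc 0 n from rfl]
    exact Finset.sum_Ioc_consecutive _ (Nat.zero_le k) hkn
  linarith

lemma harm_succ (o m : ℕ) (hm : 1 ≤ m) :
    harm o m = harm o (m - 1) + 1 / (m : ℝ) ^ o := by
  have h := harm_diff o m (m - 1) (by omega)
  have h2 : Ioc (m - 1) m = {m} := by
    ext x; simp only [mem_Ioc, mem_singleton]; omega
  rw [h2, Finset.sum_singleton] at h
  linarith

/-- The double-sum representation of the variance `V(X_n)` of the absent-minded
passengers problem equals its closed form in harmonic numbers of order 1 and 2. -/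
theorem variance_closed_form (n k : ℕ) (hn : 2 ≤ n) (hk : 1 ≤ k) (hkn : k ≤ n) :
    (k : ℝ) * ((n : ℝ) - 1) / (n : ℝ) ^ 2 +
      (∑ i ∈ Finset.Icc 1 (n - k),
        (((n : ℝ) + 1 - (i : ℝ) - (k : ℝ)) / ((n : ℝ) + 1 - (i : ℝ))) *
          (1 - ((n : ℝ) + 1 - (i : ℝ) - (k : ℝ)) / ((n : ℝ) + 1 - (i : ℝ)))) +
      2 * ((k : ℝ) * ((k : ℝ) - 1) / (2 * ((n : ℝ) - 1) * (n : ℝ) ^ 2) +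
        ∑ i ∈ Finset.Icc 1 k, ∑ j ∈ Finset.Icc 1 (n - k),
          (((n : ℝ) + 1 - (j : ℝ) - (k : ℝ)) / ((n : ℝ) - (j : ℝ)) -
            ((n : ℝ) + 1 - (j : ℝ) - (k : ℝ)) / ((n : ℝ) + 1 - (j : ℝ))) / (n : ℝ)) =
    (2 * (k : ℝ) - (k : ℝ) ^ 2 - 2 * (n : ℝ) - 2 * (k : ℝ) * (n : ℝ) +
        2 * (k : ℝ) ^ 2 * (n : ℝ) + 2 * (n : ℝ) ^ 2 - (k : ℝ) * (n : ℝ) ^ 2) /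
        (((n : ℝ) - 1) * (n : ℝ) ^ 2) -
      (k : ℝ) * ((n : ℝ) + 2) * harm 1 k / (n : ℝ) +
      (k : ℝ) * ((n : ℝ) + 2) * harm 1 n / (n : ℝ) +
      (k : ℝ) ^ 2 * harm 2 k - (k : ℝ) ^ 2 * harm 2 n := by
  have hn0 : (n : ℝ) ≠ 0 := by positivity
  have hn1 : (n : ℝ) - 1 ≠ 0 := by
    have : (2 : ℝ) ≤ (n : ℝ) := by exact_mod_cast hn
    linarith
  have hk0 : (k : ℝ) ≠ 0 := by positivity
  -- first sum
  have e1 : (∑ i ∈ Finset.Icc 1 (n - k),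
        (((n : ℝ) + 1 - (i : ℝ) - (k : ℝ)) / ((n : ℝ) + 1 - (i : ℝ))) *
          (1 - ((n : ℝ) + 1 - (i : ℝ) - (k : ℝ)) / ((n : ℝ) + 1 - (i : ℝ))))
      = (k : ℝ) * (harm 1 n - harm 1 k) - (k : ℝ) ^ 2 * (harm 2 n - harm 2 k) := by
    rw [sum_shift n k hkn (fun x => ((x - (k : ℝ)) / x) * (1 - (x - (k : ℝ)) / x))]
    have step : ∀ t ∈ Ioc k n,
        (((t : ℝ) - (k : ℝ)) / (t : ℝ)) * (1 - ((t : ℝ) - (k : ℝ)) / (t : ℝ))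
          = (k : ℝ) * (1 / (t : ℝ) ^ 1) - (k : ℝ) ^ 2 * (1 / (t : ℝ) ^ 2) := by
      intro t ht
      simp only [mem_Ioc] at ht
      have ht0 : (t : ℝ) ≠ 0 := by
        have : 1 ≤ t := by omega
        positivity
      field_simp
      ring
    rw [Finset.sum_congr rfl step, Finset.sum_sub_distrib, ← Finset.mul_sum, ← Finset.mul_sum,
      harm_diff 1 n k hkn, harm_diff 2 n k hkn]
  -- inner sum of double sum
  have e2 : (∑ j ∈ Finset.Icc 1 (n - k),
        (((n : ℝ) + 1 - (j : ℝ) - (k : ℝ)) / ((n : ℝ) - (j : ℝ)) -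
          ((n : ℝ) + 1 - (j : ℝ) - (k : ℝ)) / ((n : ℝ) + 1 - (j : ℝ))) / (n : ℝ))
      = ((k : ℝ) * (harm 1 n - harm 1 k)
          - ((k : ℝ) - 1) * ((harm 1 n - 1 / (n : ℝ) ^ 1) - (harm 1 k - 1 / (k : ℝ) ^ 1))) / n := by
    have pre : ∀ j ∈ Finset.Icc 1 (n - k),
        (((n : ℝ) + 1 - (j : ℝ) - (k : ℝ)) / ((n : ℝ) - (j : ℝ)) -
          ((n : ℝ) + 1 - (j : ℝ) - (k : ℝ)) / ((n : ℝ) + 1 - (j : ℝ))) / (n : ℝ)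
        = (fun x => ((x - (k : ℝ)) / (x - 1) - (x - (k : ℝ)) / x) / (n : ℝ))
            ((n : ℝ) + 1 - (j : ℝ)) := by
      intro j _; dsimp only; ring_nf
    rw [Finset.sum_congr rfl pre, sum_shift n k hkn
      (fun x => ((x - (k : ℝ)) / (x - 1) - (x - (k : ℝ)) / x) / (n : ℝ))]
    have step : ∀ t ∈ Ioc k n,
        (((t : ℝ) - (k : ℝ)) / ((t : ℝ) - 1) - ((t : ℝ) - (k : ℝ)) / (t : ℝ)) / (n : ℝ)
          = ((k : ℝ) * (1 / (t : ℝ) ^ 1) - ((k : ℝ) - 1) * ((fun x => 1 / x) ((t : ℝ) - 1))) / n := by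
      intro t ht
      simp only [mem_Ioc] at ht
      have ht2 : 2 ≤ t := by omega
      have ht0 : (t : ℝ) ≠ 0 := by positivity
      have ht1 : (t : ℝ) - 1 ≠ 0 := by
        have : (2 : ℝ) ≤ (t : ℝ) := by exact_mod_cast ht2
        linarith
      dsimp only
      field_simp
      ring
    rw [Finset.sum_congr rfl step]
    have split : ∑ t ∈ Ioc k n,
        ((k : ℝ) * (1 / (t : ℝ) ^ 1) - ((k : ℝ) - 1) * ((fun x => 1 / x) ((t : ℝ) - 1))) / n
        = ((k : ℝ) * (∑ t ∈ Ioc k n, 1 / (t : ℝ) ^ 1)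
          - ((k : ℝ) - 1) * (∑ t ∈ Ioc k n, (fun x => 1 / x) ((t : ℝ) - 1))) / n := by
      rw [Finset.mul_sum, Finset.mul_sum, ← Finset.sum_sub_distrib, ← Finset.sum_div]
    rw [split, harm_diff 1 n k hkn, sum_shift2 n k hk (fun x => 1 / x)]
    have sdiff : ∑ s ∈ Ioc (k - 1) (n - 1), (fun x => 1 / x) ((s : ℕ) : ℝ)
        = (harm 1 n - 1 / (n : ℝ) ^ 1) - (harm 1 k - 1 / (k : ℝ) ^ 1) := by
      have h1 := harm_diff 1 (n - 1) (k - 1) (by omega)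
      have h2 := harm_succ 1 n (by omega)
      have h3 := harm_succ 1 k hk
      simp only [pow_one] at h1 h2 h3 ⊢
      rw [h1, h2, h3]; ring
    rw [sdiff]
  rw [e1]
  rw [Finset.sum_congr rfl (fun i _ => e2), Finset.sum_const, Nat.card_Icc]
  simp only [Nat.add_sub_cancel, nsmul_eq_mul, pow_one]
  field_simp
  ring
end

section
/- For integers n ≥ 2, the quantity m₄(n,1) = ((n+14)/n - 6H̄₂)·H̄₁ + 3(n-2)·H̄₁²/n + 4H̄₁³/n - (18+7n)·H̄₂/n + 3H̄₂² + 4(2+3n)·H̄₃/n - 6H̄₄, where H̄_o = ∑_{i=1}^{n-1} 1/i^o, satisfies m₄(n,1)/ (k·log n)² → 3 with k = 1; that is, lim_{n→∞} m₄(n,1)/(log n)² = 3. -/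
open Finset Filter Topology

/-- `harmBar o n = ∑_{i=1}^{n-1} 1/i^o`, the modified generalized harmonic number. -/
noncomputable def harmBar (o n : ℕ) : ℝ := ∑ i ∈ Finset.Icc 1 (n - 1), (1 : ℝ) / (i : ℝ) ^ o

/-- The fourth central moment `m₄(n,1)` of the absent-minded passengers problem
with one absent-minded passenger. -/
noncomputable def m4 (n : ℕ) : ℝ :=
  (((n : ℝ) + 14) / (n : ℝ) - 6 * harmBar 2 n) * harmBar 1 n +
    3 * ((n : ℝ) - 2) * (harmBar 1 n) ^ 2 / (n : ℝ) +
    4 * (harmBar 1 n) ^ 3 / (n : ℝ) -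
    (18 + 7 * (n : ℝ)) * harmBar 2 n / (n : ℝ) +
    3 * (harmBar 2 n) ^ 2 +
    4 * (2 + 3 * (n : ℝ)) * harmBar 3 n / (n : ℝ) -
    6 * harmBar 4 n

/-!
`H̄₁ = log n + γ + o(1)`, while `H̄₂, H̄₃, H̄₄` converge. Dividing `m₄(n,1)` by `(log n)²`, the
term `3(n-2)H̄₁²/n` tends to `3` and every other term is `O(1/log n)` or `O(log n / n)`.
-/

open Real

-- The extra `i = 0` term is `1 / 0 ^ o = 0`.
lemma harmBar_eq_sum_range {o : ℕ} (ho : o ≠ 0) (n : ℕ) :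
    harmBar o n = ∑ i ∈ range n, 1 / (i : ℝ) ^ o := by
  rcases n with _ | m
  · simp [harmBar]
  · rw [harmBar, Nat.add_sub_cancel, range_eq_Ico, sum_eq_sum_Ico_succ_bot m.succ_pos]
    simp [ho, Ico_add_one_right_eq_Icc]

lemma tendsto_harmBar {o : ℕ} (ho : 2 ≤ o) :
    Tendsto (harmBar o) atTop (𝓝 (∑' i : ℕ, 1 / (i : ℝ) ^ o)) := by
  rw [funext (harmBar_eq_sum_range (by omega : o ≠ 0))]
  exact (summable_one_div_nat_pow.2 ho).hasSum.tendsto_sum_nat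

lemma harmBar_one_succ (m : ℕ) : harmBar 1 (m + 1) = harmonic m := by
  simp [harmBar, harmonic_eq_sum_Icc]

lemma tendsto_harmBar_one_sub_log :
    Tendsto (fun n ↦ harmBar 1 n - log n) atTop (𝓝 eulerMascheroniConstant) := by
  rw [← tendsto_add_atTop_iff_nat 1]
  simpa [harmBar_one_succ] using tendsto_harmonic_sub_log_add_one

lemma tendsto_inv_log_natCast : Tendsto (fun n : ℕ ↦ (log n)⁻¹) atTop (𝓝 0) :=
  (tendsto_log_atTop.comp tendsto_natCast_atTop_atTop).inv_tendsto_atTop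

lemma tendsto_harmBar_one_div_log : Tendsto (fun n ↦ harmBar 1 n / log n) atTop (𝓝 1) := by
  have h := (tendsto_harmBar_one_sub_log.mul tendsto_inv_log_natCast).const_add 1
  rw [mul_zero, add_zero] at h
  refine h.congr' ?_
  filter_upwards [eventually_gt_atTop 1] with n hn
  have : log n ≠ 0 := (log_pos (by exact_mod_cast hn)).ne'
  field_simp
  ring

lemma m4_div_sq_eq {n : ℕ} (hn : n ≠ 0) {L : ℝ} (hL : L ≠ 0) :
    m4 n / L ^ 2 =
      3 * (1 - 2 * (n : ℝ)⁻¹) * (harmBar 1 n / L) ^ 2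
      + (1 + 14 * (n : ℝ)⁻¹ - 6 * harmBar 2 n) * (harmBar 1 n / L) * L⁻¹
      + 4 * (harmBar 1 n / L) ^ 3 * (L / n)
      - ((7 + 18 * (n : ℝ)⁻¹) * harmBar 2 n - 3 * harmBar 2 n ^ 2
          - 4 * (3 + 2 * (n : ℝ)⁻¹) * harmBar 3 n + 6 * harmBar 4 n) * L⁻¹ ^ 2 := by
  unfold m4
  field_simp
  ring

/-- `m₄(n,1)/(log n)² → 3` as `n → ∞`. -/
theorem m4_div_log_sq_tendsto :
    Tendsto (fun n : ℕ => m4 n / (Real.log n) ^ 2) atTop (𝓝 3) := by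
  have hu := tendsto_harmBar_one_div_log
  have hv := tendsto_inv_log_natCast
  have hw : Tendsto (fun n : ℕ ↦ (n : ℝ)⁻¹) atTop (𝓝 0) := tendsto_inv_atTop_nhds_zero_nat
  have hlog_div : Tendsto (fun n : ℕ ↦ log n / n) atTop (𝓝 0) :=
    isLittleO_log_id_atTop.tendsto_div_nhds_zero.comp tendsto_natCast_atTop_atTop
  have h2 := tendsto_harmBar (le_refl 2)
  have h3 := tendsto_harmBar (by norm_num : 2 ≤ 3)
  have h4 := tendsto_harmBar (by norm_num : 2 ≤ 4)
  have hsquare := (((hw.const_mul 2).const_sub 1).const_mul 3).mul (hu.pow 2)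
  have hlinear := ((((hw.const_mul 14).const_add 1).sub (h2.const_mul 6)).mul hu).mul hv
  have hcubic := ((hu.pow 3).const_mul 4).mul hlog_div
  have hconst := (((((((hw.const_mul 18).const_add 7).mul h2).sub ((h2.pow 2).const_mul 3)).sub
    ((((hw.const_mul 2).const_add 3).const_mul 4).mul h3)).add (h4.const_mul 6))).mul (hv.pow 2)
  have hlim := ((hsquare.add hlinear).add hcubic).sub hconst
  refine Tendsto.congr' ?_ (by convert hlim using 2; norm_num)
  filter_upwards [eventually_gt_atTop 1] with n hn
  exact (m4_div_sq_eq (by omega) (log_pos (by exact_mod_cast hn)).ne').symm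
end
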